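/- Let G be a group acting on an abelian group H with G-invariant subgroups Δ and T, and let U = Δ ∩ T. Let t ∈ H^G with t = t₁t₂ (t₁ ∈ Δ, t₂ ∈ T), and let ξ_t be the cocycle ξ_t(σ) = σ(t₁)⁻¹t₁. If the class [ξ_t] in H¹(G,U) is trivial, then t ∈ Δ^G · T^G. -/
import Mathlib


lemma aux_fix_div (G H : Type) [Group G] [CommGroup H] [MulDistribMulAction G H]
    (t₁ a : H) (ha : ∀ σ : G, (σ • t₁)⁻¹ * t₁ = (σ • a)⁻¹ * a) (σ : G) :
    σ • (t₁ * a⁻¹) = t₁ * a⁻¹ := by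
  have h := ha σ
  rw [smul_mul', smul_inv']
  rw [inv_mul_eq_iff_eq_mul] at h
  conv_rhs => rw [h]
  group

/-- If the cocycle `ξ_t(σ) = σ(t₁)⁻¹t₁` attached to a factorization `t = t₁t₂`
(`t₁ ∈ Δ`, `t₂ ∈ T`) of a `G`-fixed element `t` is a coboundary with values in
`U = Δ ∩ T`, then `t ∈ Δ^G · T^G`. -/
theorem fixed_factorization_of_trivial_class (G H : Type) [Group G] [CommGroup H]
    [MulDistribMulAction G H]
    (Δ T : Subgroup H)
    (hΔ : ∀ (σ : G), ∀ x ∈ Δ, σ • x ∈ Δ) (hT : ∀ (σ : G), ∀ x ∈ T, σ • x ∈ T)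
    (t t₁ t₂ : H) (htfix : ∀ σ : G, σ • t = t)
    (h₁ : t₁ ∈ Δ) (h₂ : t₂ ∈ T) (hfac : t = t₁ * t₂)
    (hcob : ∃ a ∈ Δ ⊓ T, ∀ σ : G, (σ • t₁)⁻¹ * t₁ = (σ • a)⁻¹ * a) :
    ∃ d n : H, d ∈ Δ ∧ n ∈ T ∧ (∀ σ : G, σ • d = d) ∧ (∀ σ : G, σ • n = n) ∧
      t = d * n := by
  obtain ⟨a, haU, ha⟩ := hcob
  obtain ⟨haΔ, haT⟩ := haU
  have hfac' : t = (t₁ * a⁻¹) * (a * t₂) := by rw [hfac]; group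
  refine ⟨t₁ * a⁻¹, a * t₂, mul_mem h₁ (inv_mem haΔ), mul_mem haT h₂,
    aux_fix_div G H t₁ a ha, ?_, hfac'⟩
  intro σ
  have ht := htfix σ
  rw [hfac', smul_mul', aux_fix_div G H t₁ a ha σ] at ht
  exact mul_left_cancel ht
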